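/- arXiv:math/0603268 — 2 statements merged into one kernel-verified Lean document; each statement's English description precedes it below -/
import Mathlib

section
/- Let Γ be a discrete cocompact subgroup of SL(2,ℝ) and let φ be a meromorphic function on ℍ satisfying φ(γ·z) = (cz+d)²·φ(z) + c·(cz+d) for all γ = [[a,b],[c,d]] ∈ Γ, holomorphic outside the Γ-orbit of i, with a simple pole at i of residue 𝒦. For a meromorphic modular form f of weight k over Γ whose poles lie in the Γ-orbit of i, define D_φ(f) = f′ − k·φ·f. Then D_φ(f) is a meromorphic modular form of weight k+2 over Γ with poles only in the Γ-orbit of i, and ord_i(D_φ(f)) ≥ ord_i(f) − 1, with equality ord_i(D_φ(f)) = ord_i(f) − 1 if and only if ord_i(f) ≠ k·𝒦, where ord_i denotes the order of vanishing at z = i. -/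
open Complex Finset MeasureTheory

noncomputable section

abbrev SL2R := Matrix.SpecialLinearGroup (Fin 2) ℝ

instance : TopologicalSpace SL2R :=
  TopologicalSpace.induced (fun g : SL2R => (g : Matrix (Fin 2) (Fin 2) ℝ)) inferInstance

namespace Quasimodular

/-- The upper half-plane, as a subset of `ℂ`. -/
def UH : Set ℂ := {z : ℂ | 0 < z.im}

/-- Entries of a matrix in `SL(2, ℝ)`, as complex numbers. -/
def ga (γ : SL2R) : ℂ := ((γ : Matrix (Fin 2) (Fin 2) ℝ) 0 0 : ℝ)
def gb (γ : SL2R) : ℂ := ((γ : Matrix (Fin 2) (Fin 2) ℝ) 0 1 : ℝ)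
def gc (γ : SL2R) : ℂ := ((γ : Matrix (Fin 2) (Fin 2) ℝ) 1 0 : ℝ)
def gd (γ : SL2R) : ℂ := ((γ : Matrix (Fin 2) (Fin 2) ℝ) 1 1 : ℝ)

/-- Möbius action `γ · z = (a z + b)/(c z + d)`. -/
def moeb (γ : SL2R) (z : ℂ) : ℂ := (ga γ * z + gb γ) / (gc γ * z + gd γ)

/-- The automorphy factor `c z + d`. -/
def jfac (γ : SL2R) (z : ℂ) : ℂ := gc γ * z + gd γ

/-- Moderate growth on the upper half-plane. -/
def ModerateGrowth (f : ℂ → ℂ) : Prop :=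
  ∃ (C : ℝ) (N : ℕ), ∀ z ∈ UH, ‖f z‖ ≤ C * (z.im + z.im⁻¹) ^ N

/-- Transformation law of a quasimodular form of weight `k` and depth `≤ p`
with coefficient functions `F 0, …, F p`:
`(cz+d)^(-k) f(γ·z) = ∑_{j=0}^{p} F j (z) (c/(cz+d))^j`. -/
def QMRel (Γ : Subgroup SL2R) (k : ℤ) (p : ℕ) (f : ℂ → ℂ) (F : ℕ → ℂ → ℂ) : Prop :=
  ∀ γ ∈ Γ, ∀ z ∈ UH,
    f (moeb γ z) = jfac γ z ^ k *
      ∑ j ∈ Finset.range (p + 1), F j z * (gc γ / jfac γ z) ^ j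

/-- `f` is a quasimodular form of weight `k` and depth `≤ p` over `Γ`
with coefficient functions `F`. -/
def IsQMWith (Γ : Subgroup SL2R) (k : ℤ) (p : ℕ) (f : ℂ → ℂ) (F : ℕ → ℂ → ℂ) : Prop :=
  DifferentiableOn ℂ f UH ∧ ModerateGrowth f ∧ F 0 = f ∧ QMRel Γ k p f F

/-- `f` is a quasimodular form of weight `k` and depth `≤ p` over `Γ`. -/
def IsQM (Γ : Subgroup SL2R) (k : ℤ) (p : ℕ) (f : ℂ → ℂ) : Prop :=
  ∃ F : ℕ → ℂ → ℂ, IsQMWith Γ k p f F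

/-- `f` is a (holomorphic) modular form of weight `k` over `Γ`. -/
def IsModular (Γ : Subgroup SL2R) (k : ℤ) (f : ℂ → ℂ) : Prop :=
  DifferentiableOn ℂ f UH ∧ ModerateGrowth f ∧
    ∀ γ ∈ Γ, ∀ z ∈ UH, f (moeb γ z) = jfac γ z ^ k * f z

/-- `Γ` has finite covolume: some measurable subset of `ℍ` of finite hyperbolic
area meets every `Γ`-orbit. -/
def FiniteCovolume (Γ : Subgroup SL2R) : Prop :=
  ∃ F : Set ℂ, F ⊆ UH ∧ MeasurableSet F ∧
    (∀ z ∈ UH, ∃ γ ∈ Γ, moeb γ z ∈ F) ∧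
    (∫⁻ z in F, ENNReal.ofReal (1 / z.im ^ 2)) < ⊤

/-- `Γ` is cocompact: some compact subset of `ℍ` meets every `Γ`-orbit. -/
def Cocompact (Γ : Subgroup SL2R) : Prop :=
  ∃ K : Set ℂ, K ⊆ UH ∧ IsCompact K ∧ ∀ z ∈ UH, ∃ γ ∈ Γ, moeb γ z ∈ K

/-- The `Γ`-orbit of the point `i` in the upper half-plane. -/
def OrbitI (Γ : Subgroup SL2R) : Set ℂ := {w : ℂ | ∃ γ ∈ Γ, w = moeb γ Complex.I}

/-- `f` has at most a simple pole at `z₀`. -/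
def SimplePoleAtMost (f : ℂ → ℂ) (z₀ : ℂ) : Prop :=
  ∃ g : ℂ → ℂ, AnalyticAt ℂ g z₀ ∧
    ∀ᶠ w in nhdsWithin z₀ {z₀}ᶜ, f w = g w / (w - z₀)

/-- `f` has order of vanishing exactly `m` at `z₀` (negative `m` for a pole). -/
def OrderAt (f : ℂ → ℂ) (z₀ : ℂ) (m : ℤ) : Prop :=
  ∃ g : ℂ → ℂ, AnalyticAt ℂ g z₀ ∧ g z₀ ≠ 0 ∧
    ∀ᶠ w in nhdsWithin z₀ {z₀}ᶜ, f w = (w - z₀) ^ m * g w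

/-!
Differentiating `f (γ • z) = (c z + d) ^ k f z` gives
`f' (γ • z) = (c z + d) ^ (k + 2) f' z + k c (c z + d) ^ (k + 1) f z`, and the inhomogeneous term
`c (c z + d)` in the transformation law of `φ` cancels the second summand. Since `Γ` is discrete,
the orbit of `i` is closed in `ℍ`, so the law for `f` holds on a neighbourhood of every point off
the orbit and may be differentiated there. Near `i`, writing `f = (z - i) ^ m g` and
`φ = h / (z - i)` gives `D_φ f = (z - i) ^ (m - 1) ((m - k h(i)) g(i) + O(z - i))`, so the order
drops by exactly one unless `m = k 𝒦`.
-/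

open Filter Topology

lemma I_mem_UH : Complex.I ∈ UH := by simp [UH]

lemma ga_mul_gd_sub_gb_mul_gc (γ : SL2R) : ga γ * gd γ - gb γ * gc γ = 1 := by
  have h := γ.prop
  rw [Matrix.det_fin_two] at h
  unfold ga gb gc gd
  exact_mod_cast h

lemma jfac_ne_zero (γ : SL2R) {z : ℂ} (hz : z ∈ UH) : jfac γ z ≠ 0 := by
  have h : jfac γ z = UpperHalfPlane.denom (Matrix.SpecialLinearGroup.mapGL ℝ γ) z := by
    simp [UpperHalfPlane.denom, jfac, gc, gd]
  exact h ▸ UpperHalfPlane.denom_ne_zero_of_im _ hz.ne'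

lemma moeb_eq_coe_smul (γ : SL2R) {z : ℂ} (hz : z ∈ UH) :
    moeb γ z = ((γ • ⟨z, hz⟩ : UpperHalfPlane) : ℂ) := by
  simp [UpperHalfPlane.coe_specialLinearGroup_apply, moeb, ga, gb, gc, gd]

lemma moeb_mem_UH (γ : SL2R) {z : ℂ} (hz : z ∈ UH) : moeb γ z ∈ UH :=
  moeb_eq_coe_smul γ hz ▸ UpperHalfPlane.im_pos _

lemma moeb_mul (g h : SL2R) {z : ℂ} (hz : z ∈ UH) : moeb (g * h) z = moeb g (moeb h z) := by
  rw [moeb_eq_coe_smul _ hz, moeb_eq_coe_smul h hz, moeb_eq_coe_smul g (UpperHalfPlane.im_pos _),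
    mul_smul]

lemma moeb_inv_moeb (γ : SL2R) {z : ℂ} (hz : z ∈ UH) : moeb γ⁻¹ (moeb γ z) = z := by
  rw [moeb_eq_coe_smul γ hz, moeb_eq_coe_smul _ (UpperHalfPlane.im_pos _)]
  exact congrArg UpperHalfPlane.coe (inv_smul_smul γ _)

lemma moeb_notMem_orbitI {Γ : Subgroup SL2R} {γ : SL2R} (hγ : γ ∈ Γ) {z : ℂ} (hz : z ∈ UH)
    (hzo : z ∉ OrbitI Γ) : moeb γ z ∉ OrbitI Γ := by
  rintro ⟨δ, hδ, hγz⟩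
  refine hzo ⟨γ⁻¹ * δ, mul_mem (inv_mem hγ) hδ, ?_⟩
  rw [moeb_mul _ _ I_mem_UH, ← hγz, moeb_inv_moeb γ hz]

lemma orbitI_eq_image (Γ : Subgroup SL2R) :
    OrbitI Γ = (↑) '' ((fun g : SL2R => g • UpperHalfPlane.I) '' Γ) := by
  ext w
  simp only [OrbitI, Set.mem_ofPred_eq, Set.image_image, Set.mem_image, SetLike.mem_coe]
  refine exists_congr fun γ => and_congr_right fun _ => ?_
  rw [moeb_eq_coe_smul γ I_mem_UH, eq_comm]
  rfl

/- The topology on `SL2R` is definitionally Mathlib's subspace topology on `SL(2, ℝ)`, for which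
the lemmas on discrete subgroups and on the proper action on `ℍ` are stated. -/
lemma isClosed_smul_I_image (Γ : Subgroup SL2R) (hΓ : DiscreteTopology Γ) :
    IsClosed ((fun g : SL2R => g • UpperHalfPlane.I) '' Γ) :=
  UpperHalfPlane.isProperMap_smul_I.isClosedMap _
    (@Subgroup.isClosed_of_discrete _ _ Matrix.SpecialLinearGroup.instTopologicalSpace _ _ Γ hΓ)

lemma isOpen_UH_diff_orbitI {Γ : Subgroup SL2R} (hΓ : DiscreteTopology Γ) :
    IsOpen (UH \ OrbitI Γ) := by
  rw [orbitI_eq_image, show UH = Set.range UpperHalfPlane.coe from UpperHalfPlane.range_coe.symm,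
    ← Set.image_compl_eq_range_sdiff_image UpperHalfPlane.coe_injective]
  exact UpperHalfPlane.isOpenEmbedding_coe.isOpenMap _ (isClosed_smul_I_image Γ hΓ).isOpen_compl

lemma hasDerivAt_jfac (γ : SL2R) (z : ℂ) : HasDerivAt (jfac γ) (gc γ) z := by
  show HasDerivAt (fun w => gc γ * w + gd γ) _ z
  simpa using ((hasDerivAt_id z).const_mul (gc γ)).add_const (gd γ)

lemma hasDerivAt_moeb (γ : SL2R) {z : ℂ} (hz : z ∈ UH) :
    HasDerivAt (moeb γ) ((jfac γ z ^ 2)⁻¹) z := by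
  have hnum : HasDerivAt (fun w => ga γ * w + gb γ) (ga γ) z := by
    simpa using ((hasDerivAt_id z).const_mul (ga γ)).add_const (gb γ)
  have h := hnum.div (hasDerivAt_jfac γ z) (jfac_ne_zero γ hz)
  rwa [show ga γ * jfac γ z - (ga γ * z + gb γ) * gc γ = 1 by
    unfold jfac; linear_combination ga_mul_gd_sub_gb_mul_gc γ, one_div] at h

lemma deriv_moeb_of_eventuallyEq {f : ℂ → ℂ} {γ : SL2R} {z : ℂ} {k : ℤ} (hz : z ∈ UH)
    (hf : DifferentiableAt ℂ f z) (hfγ : DifferentiableAt ℂ f (moeb γ z))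
    (hloc : (fun w => f (moeb γ w)) =ᶠ[𝓝 z] fun w => jfac γ w ^ k * f w) :
    deriv f (moeb γ z) =
      jfac γ z ^ (k + 2) * deriv f z + k * gc γ * jfac γ z ^ (k + 1) * f z := by
  have hj := jfac_ne_zero γ hz
  have hlhs := hfγ.hasDerivAt.comp z (hasDerivAt_moeb γ hz)
  have hrhs := ((hasDerivAt_zpow k _ (Or.inl hj)).comp z (hasDerivAt_jfac γ z)).mul hf.hasDerivAt
  have h := hlhs.unique (hrhs.congr_of_eventuallyEq hloc)
  simp only [Function.comp_apply] at h
  rw [zpow_add₀ hj, zpow_add₀ hj, zpow_sub₀ hj] at *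
  field_simp at h ⊢
  linear_combination h

/-- The operator `D_φ f = f' - k φ f`. -/
def twistedDeriv (φ : ℂ → ℂ) (k : ℤ) (f : ℂ → ℂ) : ℂ → ℂ :=
  fun w => deriv f w - (k : ℂ) * φ w * f w

lemma twistedDeriv_moeb {φ f : ℂ → ℂ} {γ : SL2R} {z : ℂ} {k : ℤ} (hj : jfac γ z ≠ 0)
    (hφ : φ (moeb γ z) = jfac γ z ^ 2 * φ z + gc γ * jfac γ z)
    (hf : f (moeb γ z) = jfac γ z ^ k * f z)
    (hdf : deriv f (moeb γ z) =
      jfac γ z ^ (k + 2) * deriv f z + k * gc γ * jfac γ z ^ (k + 1) * f z) :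
    twistedDeriv φ k f (moeb γ z) = jfac γ z ^ (k + 2) * twistedDeriv φ k f z := by
  simp only [twistedDeriv]
  rw [hφ, hf, hdf, zpow_add₀ hj, zpow_add₀ hj, zpow_one, zpow_two]
  ring

lemma analyticAt_twistedDeriv {φ f : ℂ → ℂ} {z : ℂ} (k : ℤ) (hφ : AnalyticAt ℂ φ z)
    (hf : AnalyticAt ℂ f z) : AnalyticAt ℂ (twistedDeriv φ k f) z :=
  hf.deriv.sub ((analyticAt_const.mul hφ).mul hf)

lemma meromorphicAt_twistedDeriv {φ f : ℂ → ℂ} {z : ℂ} (k : ℤ) (hφ : MeromorphicAt φ z)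
    (hf : MeromorphicAt f z) : MeromorphicAt (twistedDeriv φ k f) z :=
  hf.deriv.sub (((MeromorphicAt.const _ z).mul hφ).mul hf)

lemma SimplePoleAtMost.meromorphicAt {φ : ℂ → ℂ} {z₀ : ℂ} (h : SimplePoleAtMost φ z₀) :
    MeromorphicAt φ z₀ := by
  obtain ⟨g, hg, hφ⟩ := h
  exact (hg.meromorphicAt.div (by fun_prop)).congr (EventuallyEq.symm hφ)

lemma OrderAt.meromorphicOrderAt_eq {f : ℂ → ℂ} {z₀ : ℂ} {m : ℤ} (h : OrderAt f z₀ m) :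
    meromorphicOrderAt f z₀ = m := by
  obtain ⟨g, hg, hg0, hfg⟩ := h
  have hf : MeromorphicAt f z₀ :=
    (by fun_prop : MeromorphicAt (fun w => (w - z₀) ^ m * g w) z₀).congr (EventuallyEq.symm hfg)
  exact (meromorphicOrderAt_eq_int_iff hf).2 ⟨g, hg, hg0, hfg⟩

lemma le_of_orderAt_of_eventuallyEq_zpow_mul {D G : ℂ → ℂ} {z₀ : ℂ} {p q : ℤ}
    (hG : AnalyticAt ℂ G z₀) (hD : D =ᶠ[𝓝[≠] z₀] fun w => (w - z₀) ^ p * G w)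
    (hq : OrderAt D z₀ q) : p ≤ q ∧ (G z₀ = 0 → p < q) := by
  have hqG : (q : WithTop ℤ) = p + meromorphicOrderAt G z₀ := by
    rw [← hq.meromorphicOrderAt_eq, meromorphicOrderAt_congr hD,
      show (fun w => (w - z₀) ^ p * G w) = (· - z₀) ^ p * G from rfl,
      meromorphicOrderAt_mul (by fun_prop) hG.meromorphicAt, meromorphicOrderAt_zpow_id_sub_const]
  obtain ⟨n, hn⟩ : ∃ n : ℤ, (n : WithTop ℤ) = meromorphicOrderAt G z₀ :=
    WithTop.ne_top_iff_exists.1 fun h => by simp [h] at hqG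
  rw [← hn, ← WithTop.coe_add, WithTop.coe_inj] at hqG
  have hn0 : 0 ≤ n := by
    have := hG.meromorphicOrderAt_nonneg
    rwa [← hn, WithTop.coe_nonneg] at this
  refine ⟨by omega, fun hG0 => ?_⟩
  have hlim : Tendsto G (𝓝[≠] z₀) (𝓝 0) :=
    hG0 ▸ hG.continuousAt.tendsto.mono_left nhdsWithin_le_nhds
  have hn_pos := (tendsto_zero_iff_meromorphicOrderAt_pos hG.meromorphicAt).1 hlim
  rw [← hn, WithTop.coe_pos] at hn_pos
  omega

lemma twistedDeriv_eventuallyEq_zpow_mul {φ f g h : ℂ → ℂ} {z₀ : ℂ} {k m : ℤ}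
    (hφ : φ =ᶠ[𝓝[≠] z₀] fun w => h w / (w - z₀)) (hg : AnalyticAt ℂ g z₀)
    (hf : f =ᶠ[𝓝[≠] z₀] fun w => (w - z₀) ^ m * g w) :
    twistedDeriv φ k f =ᶠ[𝓝[≠] z₀] fun w =>
      (w - z₀) ^ (m - 1) * (m * g w + (w - z₀) * deriv g w - k * h w * g w) := by
  filter_upwards [hφ, hf, hf.nhdsNE_deriv, nhdsWithin_le_nhds hg.eventually_analyticAt,
    self_mem_nhdsWithin] with w hφw hfw hdfw hgw hw
  have hw₀ : w - z₀ ≠ 0 := sub_ne_zero.mpr hw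
  have hd : HasDerivAt (fun u => (u - z₀) ^ m * g u)
      (m * (w - z₀) ^ (m - 1) * g w + (w - z₀) ^ m * deriv g w) w := by
    have hpow := (hasDerivAt_zpow m _ (Or.inl hw₀)).comp w ((hasDerivAt_id w).sub_const z₀)
    exact (hpow.mul hgw.differentiableAt.hasDerivAt).congr_deriv (by simp)
  simp only [twistedDeriv]
  rw [hdfw, hd.deriv, hφw, hfw, zpow_sub_one₀ hw₀]
  field_simp

/-- The leading coefficient of `D_φ f` at `z₀` is `m - k r` times that of `f`, where `r = h z₀` is
the residue of `φ`. -/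
theorem orderAt_twistedDeriv {φ f h : ℂ → ℂ} {z₀ : ℂ} {k m : ℤ} (hh : AnalyticAt ℂ h z₀)
    (hφ : φ =ᶠ[𝓝[≠] z₀] fun w => h w / (w - z₀)) (hf : OrderAt f z₀ m) :
    (∀ m', OrderAt (twistedDeriv φ k f) z₀ m' → m - 1 ≤ m') ∧
      ((m : ℂ) ≠ k * h z₀ → OrderAt (twistedDeriv φ k f) z₀ (m - 1)) ∧
      ((m : ℂ) = k * h z₀ → ∀ m', OrderAt (twistedDeriv φ k f) z₀ m' → m - 1 < m') := by
  obtain ⟨g, hg, hg0, hfg⟩ := hf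
  set G : ℂ → ℂ := fun w => m * g w + (w - z₀) * deriv g w - k * h w * g w
  have hG : AnalyticAt ℂ G z₀ := by fun_prop
  have hDG := twistedDeriv_eventuallyEq_zpow_mul (k := k) hφ hg hfg
  have hGz₀ : G z₀ = (m - k * h z₀) * g z₀ := by simp only [G]; ring
  refine ⟨fun m' hm' => (le_of_orderAt_of_eventuallyEq_zpow_mul hG hDG hm').1,
    fun hne => ⟨G, hG, ?_, hDG⟩,
    fun heq m' hm' => (le_of_orderAt_of_eventuallyEq_zpow_mul hG hDG hm').2 ?_⟩
  · exact hGz₀ ▸ mul_ne_zero (sub_ne_zero.mpr hne) hg0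
  · rw [hGz₀, heq, sub_self, zero_mul]

theorem statement17_general (Γ : Subgroup SL2R) (hdisc : DiscreteTopology Γ)
    (φ : ℂ → ℂ) (K : ℝ)
    (hφhol : ∀ z ∈ UH, z ∉ OrbitI Γ → AnalyticAt ℂ φ z)
    (hφpole : ∀ z ∈ OrbitI Γ, SimplePoleAtMost φ z)
    (hφres : ∃ g : ℂ → ℂ, AnalyticAt ℂ g Complex.I ∧ g Complex.I = (K : ℂ) ∧
      ∀ᶠ w in nhdsWithin Complex.I {Complex.I}ᶜ, φ w = g w / (w - Complex.I))
    (hφmod : ∀ γ ∈ Γ, ∀ z ∈ UH, z ∉ OrbitI Γ →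
      φ (moeb γ z) = jfac γ z ^ 2 * φ z + gc γ * jfac γ z)
    (k : ℤ) (f : ℂ → ℂ)
    (hfmero : ∀ z ∈ UH, MeromorphicAt f z)
    (hfhol : ∀ z ∈ UH, z ∉ OrbitI Γ → AnalyticAt ℂ f z)
    (hfmod : ∀ γ ∈ Γ, ∀ z ∈ UH, z ∉ OrbitI Γ →
      f (moeb γ z) = jfac γ z ^ k * f z) :
    (∀ z ∈ UH, MeromorphicAt (fun w => deriv f w - (k : ℂ) * φ w * f w) z) ∧
    (∀ z ∈ UH, z ∉ OrbitI Γ →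
      AnalyticAt ℂ (fun w => deriv f w - (k : ℂ) * φ w * f w) z) ∧
    (∀ γ ∈ Γ, ∀ z ∈ UH, z ∉ OrbitI Γ →
      deriv f (moeb γ z) - (k : ℂ) * φ (moeb γ z) * f (moeb γ z) =
        jfac γ z ^ (k + 2) * (deriv f z - (k : ℂ) * φ z * f z)) ∧
    (∀ m : ℤ, OrderAt f Complex.I m →
      (∀ m' : ℤ, OrderAt (fun w => deriv f w - (k : ℂ) * φ w * f w) Complex.I m' →
        m - 1 ≤ m') ∧
      ((m : ℝ) ≠ (k : ℝ) * K →
        OrderAt (fun w => deriv f w - (k : ℂ) * φ w * f w) Complex.I (m - 1)) ∧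
      ((m : ℝ) = (k : ℝ) * K →
        ∀ m' : ℤ, OrderAt (fun w => deriv f w - (k : ℂ) * φ w * f w) Complex.I m' →
          m - 1 < m')) := by
  refine ⟨fun z hz => ?_,
    fun z hz hzo => analyticAt_twistedDeriv k (hφhol z hz hzo) (hfhol z hz hzo),
    fun γ hγ z hz hzo => ?_, fun m hm => ?_⟩
  · by_cases hzo : z ∈ OrbitI Γ
    · exact meromorphicAt_twistedDeriv k (hφpole z hzo).meromorphicAt (hfmero z hz)
    · exact (analyticAt_twistedDeriv k (hφhol z hz hzo) (hfhol z hz hzo)).meromorphicAt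
  · have hloc : (fun w => f (moeb γ w)) =ᶠ[𝓝 z] fun w => jfac γ w ^ k * f w :=
      (isOpen_UH_diff_orbitI hdisc).eventually_mem ⟨hz, hzo⟩ |>.mono
        fun w hw => hfmod γ hγ w hw.1 hw.2
    have hfγ := hfhol _ (moeb_mem_UH γ hz) (moeb_notMem_orbitI hγ hz hzo)
    exact twistedDeriv_moeb (jfac_ne_zero γ hz) (hφmod γ hγ z hz hzo) (hfmod γ hγ z hz hzo)
      (deriv_moeb_of_eventuallyEq hz (hfhol z hz hzo).differentiableAt hfγ.differentiableAt hloc)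
  · obtain ⟨h, hh, hhI, hφI⟩ := hφres
    have hcast : (m : ℂ) = k * h Complex.I ↔ (m : ℝ) = k * K := by
      rw [hhI]; norm_cast
    obtain ⟨hle, hne, heq⟩ := orderAt_twistedDeriv (k := k) hh hφI hm
    exact ⟨hle, fun hmK => hne (mt hcast.1 hmK), fun hmK => heq (hcast.2 hmK)⟩

/-- Let `Γ` be discrete and cocompact, `φ` a meromorphic quasimodular
form of weight `2` with `δφ = 1`, holomorphic outside the `Γ`-orbit of `i`, with a
simple pole at `i` of residue `𝒦 ≠ 0`.  For `f` a meromorphic modular form of weight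
`k` over `Γ` with poles in the `Γ`-orbit of `i`, `D_φ f = f' - k φ f` is a meromorphic
modular form of weight `k + 2` with poles only in the `Γ`-orbit of `i`, and
`ord_i(D_φ f) ≥ ord_i(f) - 1`, with equality if and only if `ord_i(f) ≠ k·𝒦`. -/
theorem statement17 (Γ : Subgroup SL2R) (hdisc : DiscreteTopology Γ)
    (hcc : Cocompact Γ) (φ : ℂ → ℂ) (K : ℝ) (hK : K ≠ 0)
    (hφhol : ∀ z ∈ UH, z ∉ OrbitI Γ → AnalyticAt ℂ φ z)
    (hφpole : ∀ z ∈ OrbitI Γ, SimplePoleAtMost φ z)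
    (hφres : ∃ g : ℂ → ℂ, AnalyticAt ℂ g Complex.I ∧ g Complex.I = (K : ℂ) ∧
      ∀ᶠ w in nhdsWithin Complex.I {Complex.I}ᶜ, φ w = g w / (w - Complex.I))
    (hφmod : ∀ γ ∈ Γ, ∀ z ∈ UH, z ∉ OrbitI Γ →
      φ (moeb γ z) = jfac γ z ^ 2 * φ z + gc γ * jfac γ z)
    (k : ℤ) (f : ℂ → ℂ)
    (hfmero : ∀ z ∈ UH, MeromorphicAt f z)
    (hfhol : ∀ z ∈ UH, z ∉ OrbitI Γ → AnalyticAt ℂ f z)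
    (hfmod : ∀ γ ∈ Γ, ∀ z ∈ UH, z ∉ OrbitI Γ →
      f (moeb γ z) = jfac γ z ^ k * f z) :
    (∀ z ∈ UH, MeromorphicAt (fun w => deriv f w - (k : ℂ) * φ w * f w) z) ∧
    (∀ z ∈ UH, z ∉ OrbitI Γ →
      AnalyticAt ℂ (fun w => deriv f w - (k : ℂ) * φ w * f w) z) ∧
    (∀ γ ∈ Γ, ∀ z ∈ UH, z ∉ OrbitI Γ →
      deriv f (moeb γ z) - (k : ℂ) * φ (moeb γ z) * f (moeb γ z) =
        jfac γ z ^ (k + 2) * (deriv f z - (k : ℂ) * φ z * f z)) ∧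
    (∀ m : ℤ, OrderAt f Complex.I m →
      (∀ m' : ℤ, OrderAt (fun w => deriv f w - (k : ℂ) * φ w * f w) Complex.I m' →
        m - 1 ≤ m') ∧
      ((m : ℝ) ≠ (k : ℝ) * K →
        OrderAt (fun w => deriv f w - (k : ℂ) * φ w * f w) Complex.I (m - 1)) ∧
      ((m : ℝ) = (k : ℝ) * K →
        ∀ m' : ℤ, OrderAt (fun w => deriv f w - (k : ℂ) * φ w * f w) Complex.I m' →
          m - 1 < m')) :=
  statement17_general Γ hdisc φ K hφhol hφpole hφres hφmod k f hfmero hfhol hfmod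

end Quasimodular
end
end

section
/- Let G be a finitely generated additive subsemigroup of ℝ² such that the subgroup Λ of ℝ² generated by G is a lattice of rank 2. Suppose there exist P, Q ∈ G, linearly independent over ℝ, such that every element of G is a nonnegative real linear combination of P and Q, and let S = { s·P + t·Q : s, t ∈ ℝ, s ≥ 0, t ≥ 0 } be the convex sector generated by G. Then there exists A ∈ S such that (A + S) ∩ Λ ⊆ G. -/
/-!
The subgroup `M = ℤP + ℤQ` has finite index in `Λ`: some `n ≠ 0` has `n • Λ ⊆ M`. As
`-g ∈ (2n - 1) • g + M` for `g ∈ G`, we get `Λ = G + M`, so finitely many `r ∈ G` represent all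
classes of `Λ / M`. If `C` bounds the `P`- and `Q`-coordinates of these representatives, every
`x ∈ Λ` whose coordinates are at least `C` is `r + aP + bQ` with `a, b ∈ ℕ`, hence lies in `G`.
-/

section AddCommGroup

variable {V : Type*} [AddCommGroup V]

namespace AddSubgroup

/-- With `P = p₁ u + p₂ v` and `Q = q₁ u + q₂ v`, the adjugate identities give
`d • u, d • v ∈ ℤP + ℤQ` for `d = p₁ q₂ - p₂ q₁`, and `d ≠ 0` by independence. -/
theorem exists_nsmul_mem_closure_pair {u v P Q : V} (hPQ : LinearIndependent ℤ ![P, Q])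
    (hP : P ∈ closure {u, v}) (hQ : Q ∈ closure {u, v}) :
    ∃ n : ℕ, n ≠ 0 ∧ ∀ x ∈ closure {u, v}, n • x ∈ closure {P, Q} := by
  obtain ⟨p₁, p₂, hp⟩ := mem_closure_pair.mp hP
  obtain ⟨q₁, q₂, hq⟩ := mem_closure_pair.mp hQ
  set d := p₁ * q₂ - p₂ * q₁
  have hu : d • u = q₂ • P + (-p₂) • Q := by rw [← hp, ← hq]; module
  have hv : d • v = (-q₁) • P + p₁ • Q := by rw [← hp, ← hq]; module
  have hd : d ≠ 0 := by
    intro hd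
    obtain ⟨hq₂, hp₂⟩ := LinearIndependent.pair_iff.mp hPQ _ _ (by rw [← hu, hd, zero_smul])
    obtain ⟨hq₁, hp₁⟩ := LinearIndependent.pair_iff.mp hPQ _ _ (by rw [← hv, hd, zero_smul])
    simp only [neg_eq_zero] at hp₂ hq₁
    exact hPQ.ne_zero 0 (by simp [← hp, hp₁, hp₂])
  have hdM : ∀ x ∈ closure {u, v}, d • x ∈ closure {P, Q} := by
    intro x hx
    obtain ⟨i, j, rfl⟩ := mem_closure_pair.mp hx
    refine mem_closure_pair.mpr ⟨i * q₂ - j * q₁, j * p₁ - i * p₂, ?_⟩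
    rw [← hp, ← hq]; module
  refine ⟨d.natAbs, Int.natAbs_ne_zero.mpr hd, fun x hx => ?_⟩
  rw [← natCast_zsmul, ← Int.sign_mul_self, mul_zsmul]
  exact zsmul_mem (hdM x hx) _

theorem exists_finset_sub_mem_of_mem_closure_pair {u v : V} {M : AddSubgroup V} {n : ℕ}
    (hn : n ≠ 0) (hu : n • u ∈ M) (hv : n • v ∈ M) :
    ∃ R : Finset V, (R : Set V) ⊆ closure {u, v} ∧ ∀ x ∈ closure {u, v}, ∃ r ∈ R, x - r ∈ M := by
  classical
  refine ⟨(Finset.Ico (0 : ℤ) n ×ˢ Finset.Ico (0 : ℤ) n).image fun p => p.1 • u + p.2 • v,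
    ?_, fun x hx => ?_⟩
  · simp only [Finset.coe_image, Set.image_subset_iff]
    exact fun p _ => mem_closure_pair.mpr ⟨p.1, p.2, rfl⟩
  · obtain ⟨a, b, rfl⟩ := mem_closure_pair.mp hx
    have hn' : (0 : ℤ) < n := by omega
    refine ⟨(a % n) • u + (b % n) • v, Finset.mem_image.mpr ⟨(a % n, b % n), ?_, rfl⟩, ?_⟩
    · simp [Int.emod_nonneg, Int.emod_lt_of_pos _ hn', hn]
    · have hdiff : a • u + b • v - ((a % n) • u + (b % n) • v) =
          (a / n) • n • u + (b / n) • n • v := by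
        rw [Int.emod_def, Int.emod_def]; module
      rw [hdiff]
      exact add_mem (zsmul_mem hu _) (zsmul_mem hv _)

end AddSubgroup

namespace AddSubsemigroup

variable (G : AddSubsemigroup V)

theorem nsmul_mem_of_ne_zero {g : V} (hg : g ∈ G) {k : ℕ} (hk : k ≠ 0) : k • g ∈ G := by
  obtain ⟨k, rfl⟩ := Nat.exists_eq_succ_of_ne_zero hk
  induction k with
  | zero => simpa using hg
  | succ k ih => rw [succ_nsmul]; exact G.add_mem (ih k.succ_ne_zero) hg

theorem add_nsmul_mem {g P : V} (hg : g ∈ G) (hP : P ∈ G) (k : ℕ) : g + k • P ∈ G := by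
  induction k with
  | zero => simpa using hg
  | succ k ih => rw [succ_nsmul, ← add_assoc]; exact G.add_mem ih hP

theorem exists_mem_sub_mem_of_mem_closure {M : AddSubgroup V} {n : ℕ} (hn : n ≠ 0)
    (hGM : ∀ g ∈ G, n • g ∈ M) {g₀ : V} (hg₀ : g₀ ∈ G) {x : V}
    (hx : x ∈ AddSubgroup.closure (G : Set V)) : ∃ g ∈ G, x - g ∈ M := by
  induction hx using AddSubgroup.closure_induction with
  | mem g hg => exact ⟨g, hg, by simp⟩
  | zero => exact ⟨n • g₀, G.nsmul_mem_of_ne_zero hg₀ hn, by simpa using hGM g₀ hg₀⟩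
  | add x y _ _ hx hy =>
    obtain ⟨g, hg, hxg⟩ := hx
    obtain ⟨h, hh, hyh⟩ := hy
    exact ⟨g + h, G.add_mem hg hh, by simpa [add_sub_add_comm] using M.add_mem hxg hyh⟩
  | neg x _ hx =>
    obtain ⟨g, hg, hxg⟩ := hx
    refine ⟨(2 * n - 1) • g, G.nsmul_mem_of_ne_zero hg (by omega), ?_⟩
    have h2n : (2 * n - 1) • g + g = 2 • n • g := by
      rw [← succ_nsmul, ← mul_nsmul', Nat.sub_add_cancel (by omega)]
    have : -x - (2 * n - 1) • g = -(x - g) - 2 • n • g := by rw [← h2n]; abel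
    rw [this]
    exact M.sub_mem (M.neg_mem hxg) (M.nsmul_mem (hGM g hg) 2)

theorem exists_finset_subset_sub_mem {u v : V}
    (hlat : AddSubgroup.closure (G : Set V) = AddSubgroup.closure {u, v}) {M : AddSubgroup V}
    {n : ℕ} (hn : n ≠ 0) (hnM : ∀ x ∈ AddSubgroup.closure (G : Set V), n • x ∈ M) {g₀ : V}
    (hg₀ : g₀ ∈ G) :
    ∃ R : Finset V, (R : Set V) ⊆ G ∧
      ∀ x ∈ AddSubgroup.closure (G : Set V), ∃ r ∈ R, x - r ∈ M := by
  classical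
  obtain ⟨R, hRΛ, hR⟩ := AddSubgroup.exists_finset_sub_mem_of_mem_closure_pair hn
    (hnM u (hlat ▸ AddSubgroup.subset_closure (by simp)))
    (hnM v (hlat ▸ AddSubgroup.subset_closure (by simp)))
  have hRG : ∀ r ∈ R, ∃ g ∈ G, r - g ∈ M := fun r hr =>
    G.exists_mem_sub_mem_of_mem_closure hn (fun g hg => hnM g (AddSubgroup.subset_closure hg))
      hg₀ (hlat ▸ hRΛ hr)
  choose! g hgG hrg using hRG
  refine ⟨R.image g, by simpa [Set.image_subset_iff, Set.subset_def] using hgG, fun x hx => ?_⟩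
  obtain ⟨r, hr, hxr⟩ := hR x (hlat ▸ hx)
  exact ⟨g r, Finset.mem_image_of_mem g hr, by simpa using add_mem hxr (hrg r hr)⟩

end AddSubsemigroup

end AddCommGroup

section Real

variable {V : Type*} [AddCommGroup V] [Module ℝ V] {P Q : V}

theorem exists_eq_smul_add_smul_of_nsmul_mem_closure_pair {n : ℕ} (hn : n ≠ 0) {x : V}
    (hx : n • x ∈ AddSubgroup.closure {P, Q}) : ∃ σ τ : ℝ, x = σ • P + τ • Q := by
  obtain ⟨a, b, hab⟩ := AddSubgroup.mem_closure_pair.mp hx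
  rw [← Int.cast_smul_eq_zsmul ℝ, ← Int.cast_smul_eq_zsmul ℝ, ← Nat.cast_smul_eq_nsmul ℝ] at hab
  have hn' : (n : ℝ) ≠ 0 := Nat.cast_ne_zero.mpr hn
  refine ⟨a / n, b / n, ?_⟩
  calc x = (n : ℝ)⁻¹ • ((n : ℝ) • x) := (inv_smul_smul₀ hn' x).symm
    _ = (a / n : ℝ) • P + (b / n : ℝ) • Q := by rw [← hab]; module

theorem exists_forall_le_of_forall_eq_smul_add_smul (R : Finset V)
    (hR : ∀ r ∈ R, ∃ σ τ : ℝ, r = σ • P + τ • Q) :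
    ∃ C : ℝ, ∀ r ∈ R, ∃ σ τ : ℝ, σ ≤ C ∧ τ ≤ C ∧ r = σ • P + τ • Q := by
  classical
  choose! σ τ hστ using hR
  obtain ⟨C, hC⟩ := (R.image fun r => max (σ r) (τ r)).exists_le
  refine ⟨C, fun r hr => ⟨σ r, τ r, ?_, ?_, hστ r hr⟩⟩
  · exact (le_max_left _ _).trans (hC _ (Finset.mem_image_of_mem _ hr))
  · exact (le_max_right _ _).trans (hC _ (Finset.mem_image_of_mem _ hr))

namespace AddSubsemigroup

variable (G : AddSubsemigroup V)

theorem smul_add_smul_mem_of_sub_mem_closure_pair (hP : P ∈ G) (hQ : Q ∈ G)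
    (hPQ : LinearIndependent ℝ ![P, Q]) {σ τ σ' τ' : ℝ} (hσ : σ' ≤ σ) (hτ : τ' ≤ τ)
    (hG : σ' • P + τ' • Q ∈ G)
    (hM : σ • P + τ • Q - (σ' • P + τ' • Q) ∈ AddSubgroup.closure {P, Q}) :
    σ • P + τ • Q ∈ G := by
  obtain ⟨a, b, hab⟩ := AddSubgroup.mem_closure_pair.mp hM
  rw [← Int.cast_smul_eq_zsmul ℝ, ← Int.cast_smul_eq_zsmul ℝ] at hab
  obtain ⟨ha, hb⟩ : (a : ℝ) = σ - σ' ∧ (b : ℝ) = τ - τ' :=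
    hPQ.eq_of_pair (by rw [hab]; module)
  lift a to ℕ using by exact_mod_cast ha ▸ sub_nonneg.mpr hσ
  lift b to ℕ using by exact_mod_cast hb ▸ sub_nonneg.mpr hτ
  rw [← sub_add_cancel (σ • P + τ • Q) (σ' • P + τ' • Q), ← hab, add_comm]
  simp only [Int.cast_natCast, Nat.cast_smul_eq_nsmul, ← add_assoc]
  exact G.add_nsmul_mem (G.add_nsmul_mem hG hP a) hQ b

theorem exists_forall_le_smul_add_smul_mem {u v : V}
    (hlat : AddSubgroup.closure (G : Set V) = AddSubgroup.closure {u, v}) (hP : P ∈ G)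
    (hQ : Q ∈ G) (hPQ : LinearIndependent ℝ ![P, Q]) :
    ∃ C : ℝ, 0 ≤ C ∧ ∀ σ τ : ℝ, C ≤ σ → C ≤ τ →
      σ • P + τ • Q ∈ AddSubgroup.closure (G : Set V) → σ • P + τ • Q ∈ G := by
  have hΛ : ∀ x ∈ G, x ∈ AddSubgroup.closure {u, v} := fun x hx =>
    hlat ▸ AddSubgroup.subset_closure hx
  obtain ⟨n, hn, hnM⟩ := AddSubgroup.exists_nsmul_mem_closure_pair
    (hPQ.restrict_scalars' ℤ) (hΛ P hP) (hΛ Q hQ)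
  rw [← hlat] at hnM
  obtain ⟨R, hRG, hR⟩ := G.exists_finset_subset_sub_mem hlat hn hnM hP
  obtain ⟨C, hC⟩ := exists_forall_le_of_forall_eq_smul_add_smul R fun r hr =>
    exists_eq_smul_add_smul_of_nsmul_mem_closure_pair hn
      (hnM r (AddSubgroup.subset_closure (hRG hr)))
  refine ⟨max C 0, le_max_right _ _, fun σ τ hσ hτ hx => ?_⟩
  obtain ⟨r, hr, hxr⟩ := hR _ hx
  obtain ⟨σ', τ', hσ', hτ', rfl⟩ := hC r hr
  exact G.smul_add_smul_mem_of_sub_mem_closure_pair hP hQ hPQ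
    ((hσ'.trans (le_max_left _ _)).trans hσ) ((hτ'.trans (le_max_left _ _)).trans hτ) (hRG hr) hxr

end AddSubsemigroup

theorem add_mem_of_forall_mem_iff_sum_smul {ι : Type*} [Fintype ι] {b : ι → V} {G : Set V}
    (hG : ∀ x, x ∈ G ↔ ∃ e : ι → ℕ, e ≠ 0 ∧ x = ∑ i, (e i : ℝ) • b i) {x y : V}
    (hx : x ∈ G) (hy : y ∈ G) : x + y ∈ G := by
  rw [hG] at hx hy ⊢
  obtain ⟨e, he, rfl⟩ := hx
  obtain ⟨f, -, rfl⟩ := hy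
  exact ⟨e + f, fun h => he (add_eq_zero.mp h).1, by simp [add_smul, Finset.sum_add_distrib]⟩

end Real

theorem statement18_general (G : Set (ℝ × ℝ)) (m : ℕ) (Pgen : Fin m → ℝ × ℝ)
    (hgen : ∀ x, x ∈ G ↔ ∃ e : Fin m → ℕ, e ≠ 0 ∧ x = ∑ i, (e i : ℝ) • Pgen i)
    (u v : ℝ × ℝ)
    (hlat : AddSubgroup.closure G = AddSubgroup.closure {u, v})
    (P Q : ℝ × ℝ) (hP : P ∈ G) (hQ : Q ∈ G)
    (hPQ : LinearIndependent ℝ ![P, Q]) :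
    ∃ A : ℝ × ℝ, (∃ s t : ℝ, 0 ≤ s ∧ 0 ≤ t ∧ A = s • P + t • Q) ∧
      ∀ B : ℝ × ℝ, (∃ s t : ℝ, 0 ≤ s ∧ 0 ≤ t ∧ B = s • P + t • Q) →
        A + B ∈ AddSubgroup.closure G → A + B ∈ G := by
  let S : AddSubsemigroup (ℝ × ℝ) := ⟨G, add_mem_of_forall_mem_iff_sum_smul hgen⟩
  obtain ⟨C, hC0, hC⟩ := S.exists_forall_le_smul_add_smul_mem hlat hP hQ hPQ
  refine ⟨C • P + C • Q, ⟨C, C, hC0, hC0, rfl⟩, ?_⟩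
  rintro B ⟨s, t, hs, ht, rfl⟩
  have hAB : C • P + C • Q + (s • P + t • Q) = (C + s) • P + (C + t) • Q := by module
  rw [hAB]
  exact hC _ _ (le_add_of_nonneg_right hs) (le_add_of_nonneg_right ht)

/-- Let `G` be a finitely generated additive subsemigroup of `ℝ²`
(with generators `Pgen i`) whose generated subgroup `Λ` is a lattice of rank `2`
(generated by two linearly independent vectors `u, v`).  Suppose `P, Q ∈ G` are
linearly independent and every element of `G` is a nonnegative real combination of
`P` and `Q`, and let `S = {sP + tQ : s, t ≥ 0}` be the convex sector generated by `G`.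
Then there exists `A ∈ S` with `(A + S) ∩ Λ ⊆ G`. -/
theorem statement18 (G : Set (ℝ × ℝ)) (m : ℕ) (Pgen : Fin m → ℝ × ℝ)
    (hgen : ∀ x, x ∈ G ↔ ∃ e : Fin m → ℕ, e ≠ 0 ∧ x = ∑ i, (e i : ℝ) • Pgen i)
    (u v : ℝ × ℝ) (huv : LinearIndependent ℝ ![u, v])
    (hlat : AddSubgroup.closure G = AddSubgroup.closure {u, v})
    (P Q : ℝ × ℝ) (hP : P ∈ G) (hQ : Q ∈ G)
    (hPQ : LinearIndependent ℝ ![P, Q])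
    (hcone : ∀ x ∈ G, ∃ s t : ℝ, 0 ≤ s ∧ 0 ≤ t ∧ x = s • P + t • Q) :
    ∃ A : ℝ × ℝ, (∃ s t : ℝ, 0 ≤ s ∧ 0 ≤ t ∧ A = s • P + t • Q) ∧
      ∀ B : ℝ × ℝ, (∃ s t : ℝ, 0 ≤ s ∧ 0 ≤ t ∧ B = s • P + t • Q) →
        A + B ∈ AddSubgroup.closure G → A + B ∈ G :=
  statement18_general G m Pgen hgen u v hlat P Q hP hQ hPQ
end
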